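/- arXiv:1607.05957 — 3 statements merged into one kernel-verified Lean document; each statement's English description precedes it below -/
import Mathlib

section
/- Assume K is a (1,∞)-bounded kernel on V, d ∈ L^∞(V), and S is a structural set of type B for K. Define recursively S₀ := S and S_n := {x ∈ V : |K|(x, V∖S_{n−1}) = 0} ∪ S_{n−1}, where |K|(x,·) is the total variation measure of K(x,·). Then the sets S_n cover V, i.e. V = ∪_{n≥0} S_n. -/
open MeasureTheory Filter Topology

noncomputable section

/-- The `(1,∞)`-norm of a complex kernel density: `sup_y ∫ |h(x,y)| dμ(x)`. -/
def norm1inf {V : Type*} [MeasurableSpace V] (μ : Measure V) (h : V → V → ℂ) : ℝ :=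
  ⨆ y, ∫ x, ‖h x y‖ ∂μ

/-- The `(1,∞)`-norm of a nonnegative real kernel. -/
def norm1infR {V : Type*} [MeasurableSpace V] (μ : Measure V) (M : V → V → ℝ) : ℝ :=
  ⨆ y, ∫ x, M x y ∂μ

/-- `h` is the density of a `(1,∞)`-bounded kernel `K(x,B) = ∫_B h(x,y) μ(dy)`:
each `K(x,·)` is a complex measure and `‖h‖_{1,∞} < ∞`. -/
structure IsKernelDensity {V : Type*} [MeasurableSpace V] (μ : Measure V)
    (h : V → V → ℂ) : Prop where
  meas : Measurable (Function.uncurry h)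
  intFiber : ∀ x, Integrable (h x) μ
  bound : ∃ C : ℝ, ∀ y, ∫ x, ‖h x y‖ ∂μ ≤ C

/-- `d ∈ L^∞(V)`: a bounded measurable function. -/
structure IsBddMeas {V : Type*} [MeasurableSpace V] (d : V → ℂ) : Prop where
  meas : Measurable d
  bound : ∃ C : ℝ, ∀ x, ‖d x‖ ≤ C

/-- Sup norm of `d`. -/
def supNorm {V : Type*} (d : V → ℂ) : ℝ := ⨆ x, ‖d x‖

/-- The operator `A_{d,K} f (x) = d(x) f(x) + ∫ f(y) K(x,dy)`, at the level of functions. -/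
def Aop {V : Type*} [MeasurableSpace V] (μ : Measure V) (d : V → ℂ) (h : V → V → ℂ)
    (f : V → ℂ) : V → ℂ :=
  fun x => d x * f x + ∫ y, f y * h x y ∂μ

/-- The Markov operator `Q_K f (x) = ∫ f(y) K(x,dy)`, at the level of functions. -/
def Qop {V : Type*} [MeasurableSpace V] (μ : Measure V) (h : V → V → ℂ)
    (f : V → ℂ) : V → ℂ :=
  fun x => ∫ y, f y * h x y ∂μ

/-- `Σ_d = closure of d(V∖S)`. -/
def SigmaSet {V : Type*} (d : V → ℂ) (S : Set V) : Set ℂ := closure (d '' Sᶜ)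

/-- The taboo set functions `τ_{S,n}(x,B)`. -/
def tabooK {V : Type*} [MeasurableSpace V] (μ : Measure V) (h : V → V → ℂ) (S : Set V) :
    ℕ → V → Set V → ℂ
  | 0 => fun _ _ => 0
  | 1 => fun x B => ∫ y in B, h x y ∂μ
  | (n+2) => fun x B => ∫ z in Sᶜ, h x z * tabooK μ h S (n+1) z B ∂μ

/-- A sequence of positive reals converging to `0` super exponentially. -/
def SuperExpDecay (t : ℕ → ℝ) : Prop :=
  (∀ n, 0 < t n) ∧ Tendsto (fun n => Real.log (t n) / n) atTop atBot

/-- `S` is a structural set of type A for the kernel with density `h`, witnessed by the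
super-exponentially decaying sequence `t` and the majorant `M ∈ L^{1,∞}`. -/
structure IsTypeA {V : Type*} [MeasurableSpace V] (μ : Measure V) (h : V → V → ℂ)
    (S : Set V) (t : ℕ → ℝ) (M : V → V → ℝ) : Prop where
  nonempty : S.Nonempty
  measS : MeasurableSet S
  t_decay : SuperExpDecay t
  M_nonneg : ∀ x y, 0 ≤ M x y
  M_meas : Measurable (Function.uncurry M)
  M_bound : ∃ C : ℝ, ∀ y, ∫ x, M x y ∂μ ≤ C
  taboo_bound : ∀ n, 2 ≤ n → ∀ x, ∀ B : Set V, MeasurableSet B →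
    ‖tabooK μ h S n x B‖ ≤ t n * ∫ y in B, M x y ∂μ

/-- The point-set map `φ_{S^c}(x) = S^c ∩ supp K(x,·)`. -/
def phiSc {V : Type*} (h : V → V → ℂ) (S : Set V) (x : V) : Set V :=
  Sᶜ ∩ {y | h x y ≠ 0}

/-- Iterates of the point-set map `φ_{S^c}`. -/
def phiScIter {V : Type*} (h : V → V → ℂ) (S : Set V) : ℕ → V → Set V
  | 0, x => {x}
  | (n+1), x => ⋃ y ∈ phiScIter h S n x, phiSc h S y

/-- `n_S(x) = min {k : φ_{S^c}^k (x) = ∅}`. -/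
def nSfun {V : Type*} (h : V → V → ℂ) (S : Set V) (x : V) : ℕ :=
  sInf {k | phiScIter h S k x = ∅}

/-- `S` is a structural set of type B for the kernel with density `h`, witnessed by `M`. -/
structure IsTypeB {V : Type*} [MeasurableSpace V] (μ : Measure V) (h : V → V → ℂ)
    (S : Set V) (M : V → ℝ) : Prop where
  nonempty : S.Nonempty
  measS : MeasurableSet S
  M_meas : Measurable M
  M_nonneg : ∀ x, 0 ≤ M x
  phi_empty : ∀ x ∈ Sᶜ, ∃ n, phiScIter h S n x = ∅
  kernel_bound : ∀ x ∈ Sᶜ, ∀ B : Set V, B ⊆ Sᶜ → MeasurableSet B →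
    ENNReal.ofReal ‖∫ y in B, h x y ∂μ‖ ≤ ENNReal.ofReal (M x) * μ B
  int_nM : Integrable (fun x => (nSfun h S x : ℝ) * M x) (μ.restrict Sᶜ)

/-- The densities of the kernels `K^{(n)}_{S,λ}`. -/
def knD {V : Type*} [MeasurableSpace V] (μ : Measure V) (h : V → V → ℂ) (d : V → ℂ)
    (S : Set V) (lam : ℂ) : ℕ → V → V → ℂ
  | 0 => fun _ _ => 0
  | 1 => fun x y => h x y
  | (n+2) => fun x y => ∫ z in Sᶜ, h x z * knD μ h d S lam (n+1) z y / (lam - d z) ∂μ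

/-- The set functions `K^{(n)}_{S,λ}(x,B)`. -/
def knSet {V : Type*} [MeasurableSpace V] (μ : Measure V) (h : V → V → ℂ) (d : V → ℂ)
    (S : Set V) (lam : ℂ) : ℕ → V → Set V → ℂ
  | 0 => fun _ _ => 0
  | 1 => fun x B => ∫ y in B, h x y ∂μ
  | (n+2) => fun x B => ∫ z in Sᶜ, h x z * knSet μ h d S lam (n+1) z B / (lam - d z) ∂μ

/-- The density of `R_{S,λ}`: `Σ_{n ≥ 1}` of the densities of `K^{(n)}_{S,λ}`. -/
def rD {V : Type*} [MeasurableSpace V] (μ : Measure V) (h : V → V → ℂ) (d : V → ℂ)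
    (S : Set V) (lam : ℂ) (x y : V) : ℂ :=
  ∑' n : ℕ, knD μ h d S lam (n+1) x y

/-- The reduced operator `R_S(λ)` at the level of functions:
`(R_S(λ) f)(x) = d(x) f(x) + ∫_S f(y) R_{S,λ}(x,dy)`. -/
def Rop {V : Type*} [MeasurableSpace V] (μ : Measure V) (h : V → V → ℂ) (d : V → ℂ)
    (S : Set V) (lam : ℂ) (f : V → ℂ) : V → ℂ :=
  fun x => d x * f x + ∫ y in S, f y * rD μ h d S lam x y ∂μ

/-- The depth sets `S_n`:  `S_0 = S` and
`S_n = {x : |K|(x, V∖S_{n−1}) = 0} ∪ S_{n−1}`. -/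
def depthSet {V : Type*} [MeasurableSpace V] (μ : Measure V) (h : V → V → ℂ) (S : Set V) :
    ℕ → Set V
  | 0 => S
  | (n+1) => {x | ∫⁻ y in (depthSet μ h S n)ᶜ, ‖h x y‖₊ ∂μ = 0} ∪ depthSet μ h S n

/-- `S` is a structural set of type A quasi-B for `h`, with approximating kernels `hn`. -/
def IsTypeAQuasiB {V : Type*} [MeasurableSpace V] (μ : Measure V) (h : V → V → ℂ)
    (S : Set V) (hn : ℕ → V → V → ℂ) : Prop :=
  (∃ t M, IsTypeA μ h S t M) ∧
  (∀ n, IsKernelDensity μ (hn n)) ∧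
  Tendsto (fun n => norm1inf μ (fun x y => h x y - hn n x y)) atTop (𝓝 0) ∧
  (∀ n, ∃ M, IsTypeB μ (hn n) S M)

end

open MeasureTheory Filter Topology in
lemma subset_depthSet {V : Type*} [MeasurableSpace V] (μ : Measure V)
    (h : V → V → ℂ) (S : Set V) : ∀ n, S ⊆ depthSet μ h S n := by
  intro n; induction n with
  | zero => exact subset_rfl
  | succ n ih => exact ih.trans Set.subset_union_right

lemma phiScIter_succ_eq {V : Type*} (h : V → V → ℂ) (S : Set V) :
    ∀ n x, phiScIter h S (n+1) x = ⋃ y ∈ phiSc h S x, phiScIter h S n y := by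
  intro n
  induction n with
  | zero => intro x; simp [phiScIter]
  | succ n ih =>
    intro x
    show ⋃ z ∈ phiScIter h S (n+1) x, phiSc h S z = _
    rw [ih x]
    ext w
    simp only [Set.mem_iUnion, exists_prop]
    constructor
    · rintro ⟨z, ⟨y, hy, hz⟩, hw⟩
      exact ⟨y, hy, by rw [phiScIter]; exact Set.mem_biUnion hz hw⟩
    · rintro ⟨y, hy, hw⟩
      rw [phiScIter] at hw
      rcases Set.mem_iUnion₂.1 hw with ⟨z, hz, hw⟩
      exact ⟨z, ⟨y, hy, hz⟩, hw⟩

open MeasureTheory Filter Topology in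
lemma mem_depthSet_of_iter_empty {V : Type*} [MeasurableSpace V] (μ : Measure V)
    (h : V → V → ℂ) (S : Set V) (hmeas : Measurable (Function.uncurry h)) :
    ∀ n x, phiScIter h S n x = ∅ → x ∈ depthSet μ h S n := by
  intro n
  induction n with
  | zero =>
    intro x hx
    exact absurd hx (by simp [phiScIter])
  | succ n ih =>
    intro x hx
    have key : ∀ y, y ∉ depthSet μ h S n → h x y = 0 := by
      intro y hy
      by_contra hne
      have hyS : y ∈ Sᶜ := fun hyS => hy (subset_depthSet μ h S n hyS)
      have hyphi : y ∈ phiSc h S x := ⟨hyS, hne⟩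
      have : phiScIter h S n y = ∅ := by
        have hsub : phiScIter h S n y ⊆ phiScIter h S (n+1) x := by
          rw [phiScIter_succ_eq]
          exact Set.subset_biUnion_of_mem hyphi
        rw [hx] at hsub
        exact Set.subset_empty_iff.1 hsub
      exact hy (ih y this)
    refine Set.mem_union_left _ ?_
    show ∫⁻ y in (depthSet μ h S n)ᶜ, ‖h x y‖₊ ∂μ = 0
    set D : Set V := {y | h x y ≠ 0} with hD
    have hDmeas : MeasurableSet D := by
      have : Measurable (h x) := hmeas.of_uncurry_left
      exact (this (measurableSet_singleton 0)).compl
    have hDsub : D ⊆ depthSet μ h S n := fun y hy => by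
      by_contra hc; exact hy (key y hc)
    have hind : ∀ y, (‖h x y‖₊ : ENNReal) = D.indicator (fun y => (‖h x y‖₊ : ENNReal)) y := by
      intro y
      by_cases hy : h x y = 0
      · simp [hD, Set.indicator, hy]
      · simp [hD, Set.indicator, hy]
    calc ∫⁻ y in (depthSet μ h S n)ᶜ, ‖h x y‖₊ ∂μ
        = ∫⁻ y in (depthSet μ h S n)ᶜ, D.indicator (fun y => (‖h x y‖₊ : ENNReal)) y ∂μ := by
          exact lintegral_congr hind
      _ = ∫⁻ y in D, (‖h x y‖₊ : ENNReal) ∂(μ.restrict (depthSet μ h S n)ᶜ) := by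
          rw [lintegral_indicator hDmeas]
      _ = ∫⁻ y, (‖h x y‖₊ : ENNReal) ∂(μ.restrict (D ∩ (depthSet μ h S n)ᶜ)) := by
          rw [Measure.restrict_restrict hDmeas]
      _ = 0 := by
          have : D ∩ (depthSet μ h S n)ᶜ = ∅ := by
            rw [Set.eq_empty_iff_forall_notMem]
            rintro y ⟨hy1, hy2⟩
            exact hy2 (hDsub hy1)
          rw [this, Measure.restrict_empty, lintegral_zero_measure]

open MeasureTheory Filter Topology in
/-- For a type B structural set `S`, the depth sets `S_n` (with `S_0 = S` and
`S_n = {x : |K|(x, V∖S_{n−1}) = 0} ∪ S_{n−1}`) cover `V`. -/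
theorem stmt6 {V : Type*} [MeasurableSpace V] (μ : Measure V) [SigmaFinite μ]
    (h : V → V → ℂ) (d : V → ℂ) (S : Set V) (M : V → ℝ)
    (hK : IsKernelDensity μ h) (hd : IsBddMeas d) (hB : IsTypeB μ h S M) :
    ⋃ n : ℕ, depthSet μ h S n = Set.univ := by
  rw [Set.eq_univ_iff_forall]
  intro x
  rw [Set.mem_iUnion]
  by_cases hx : x ∈ S
  · exact ⟨0, hx⟩
  · obtain ⟨n, hn⟩ := hB.phi_empty x hx
    exact ⟨n, mem_depthSet_of_iter_empty μ h S hK.meas n x hn⟩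
end

section
/- Assume K is a (1,∞)-bounded kernel on V and d ∈ L^∞(V). Let λ₀ ∈ ℂ∖Σ_d, f ∈ L^1(V,μ), v ∈ L^1(S) and u ∈ L^1(V,μ). Then the following two statements are equivalent: (1) u = (v̄ − D(λ₀) f) + D(λ₀) Q u, where v̄ is the extension of v by 0 to V, Q is the Markov operator of K, and D(λ₀) is the operator (D(λ₀) h)(z) := 1_{S^c}(z) · h(z)/(λ₀ − d(z)); (2) u = v on S, and ((A_{d,K} − λ₀ I) u)(z) = f(z) for all z ∈ S^c. -/
open MeasureTheory Filter Topology

open Classical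

/-- The operator `D(λ) h (z) = 1_{S^c}(z) h(z)/(λ − d(z))`. -/
noncomputable def Dop {V : Type*} (d : V → ℂ) (S : Set V) (lam : ℂ) (g : V → ℂ) : V → ℂ :=
  fun z => if z ∈ S then 0 else g z / (lam - d z)

/-- The extension of `v` by `0` outside `S`. -/
noncomputable def extend0 {V : Type*} (S : Set V) (v : V → ℂ) : V → ℂ :=
  fun z => if z ∈ S then v z else 0

open MeasureTheory Filter Topology in
/-- Given `λ₀ ∉ Σ_d`, `f ∈ L¹(V)`, `v ∈ L¹(S)` and `u ∈ L¹(V)`, the fixed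
point equation `u = (v̄ − D(λ₀) f) + D(λ₀) Q u` is equivalent to: `u = v` on `S` and
`(A_{d,K} − λ₀ I) u = f` on `S^c`. -/
theorem stmt11 {V : Type*} [MeasurableSpace V] (μ : Measure V) [SigmaFinite μ]
    (h : V → V → ℂ) (d : V → ℂ) (S : Set V)
    (hK : IsKernelDensity μ h) (hd : IsBddMeas d)
    (lam₀ : ℂ) (hlam : lam₀ ∉ SigmaSet d S)
    (f v u : V → ℂ) (hf : Integrable f μ) (hv : Integrable v (μ.restrict S))
    (hu : Integrable u μ) :
    (∀ z : V, u z = (extend0 S v z - Dop d S lam₀ f z) + Dop d S lam₀ (Qop μ h u) z) ↔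
    ((∀ x ∈ S, u x = v x) ∧ ∀ z ∈ Sᶜ, Aop μ d h u z - lam₀ * u z = f z) := by
  have hne : ∀ z ∉ S, lam₀ - d z ≠ 0 := by
    intro z hz hz0
    apply hlam
    have : d z ∈ d '' Sᶜ := ⟨z, hz, rfl⟩
    have : d z ∈ SigmaSet d S := subset_closure this
    have hdz : lam₀ = d z := by linear_combination hz0
    rwa [hdz]
  constructor
  · intro H
    constructor
    · intro x hx
      have := H x
      simp [extend0, Dop, hx] at this
      exact this
    · intro z hz
      have hz' : z ∉ S := hz
      have := H z
      simp only [extend0, Dop, if_neg hz'] at this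
      have hne' := hne z hz'
      have key : u z * (lam₀ - d z) = (∫ y, u y * h z y ∂μ) - f z := by
        rw [← eq_div_iff hne', this]; unfold Qop; ring
      unfold Aop
      linear_combination -key
  · rintro ⟨h1, h2⟩ z
    by_cases hz : z ∈ S
    · simp [extend0, Dop, hz, h1 z hz]
    · have := h2 z hz
      unfold Aop at this
      simp only [extend0, Dop, if_neg hz]
      have hne' := hne z hz
      have key : u z = ((∫ y, u y * h z y ∂μ) - f z) / (lam₀ - d z) := by
        rw [eq_div_iff hne']; linear_combination -this
      rw [key]; unfold Qop; ring
end

section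
/- Consider the Markov chain on state space ℕ = {1,2,…} with transition matrix (w(i,j)) (w(i,j) = probability of moving from state j to state i) given by: w(i,1) = a_i for all i; w(2,2) = 1 − b₁; w(i−1,i) = b_{i−1} for all i ≥ 2; w(1,i) = 1 − b_{i−1} for all i ≥ 3; and w(i,j) = 0 otherwise. Assume (B1): Σ_{i≥1} a_i = 1 and 0 < a_i, b_i < 1 for all i; and (B2): there exist C > 1 and 0 < ρ < 1 with b_i < C ρ^i for all i. Then this Markov chain has a unique stationary probability measure q = (q(i))_{i∈ℕ}, and it is given by q(i) = u(i) / Σ_{j≥1} |u(j)|, where u(i) = v(i) for i = 1,2 and u(i) = Σ_{k≥1} (∏_{ℓ=0}^{k−2} b_{i+ℓ}) a_{i+k−1} · v(1) for i ≥ 3, and (v(1),v(2)) is an eigenvector with positive entries, for the eigenvalue λ = 1, of the 2×2 matrix R with entries R₁₁ = 1 − σ, R₁₂ = b₁, R₂₁ = σ, R₂₂ = 1 − b₁, where σ := Σ_{ℓ≥0} (∏_{k=1}^{ℓ} b_{k+1}) a_{ℓ+2}. -/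
/-!
For `i ≥ 3` the `i`-th stationarity equation reads `q i = a i * q 1 + b i * q (i + 1)`. Unrolling
it and using `q i → 0` gives `q i = T i * q 1`, where `T i = ∑ₖ (∏_{ℓ<k} b (i + ℓ)) a (i + k)` is
`tailSeries a b i`, and the equation for `i = 2` then gives `b 1 * q 2 = T 2 * q 1`. Hence all
stationary vectors lie on one ray, the one spanned by `u`. Conversely `u` solves every equation,
the first one through a telescoping sum, and `u` is summable because `T i ≤ a i + b i * ∑ a` while
`b` is dominated by a geometric sequence.
-/

open Filter Topology Finset

noncomputable def tailSeries (a b : ℕ → ℝ) (i : ℕ) : ℝ :=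
  ∑' k : ℕ, (∏ ℓ ∈ range k, b (i + ℓ)) * a (i + k)

section TailSeries

variable {a b : ℕ → ℝ}

lemma prod_range_mem_Icc (hb : ∀ i, 1 ≤ i → b i ∈ Set.Icc 0 1) {i : ℕ} (hi : 1 ≤ i) (k : ℕ) :
    ∏ ℓ ∈ range k, b (i + ℓ) ∈ Set.Icc 0 1 :=
  ⟨prod_nonneg fun ℓ _ => (hb _ (by omega)).1,
    prod_le_one (fun ℓ _ => (hb _ (by omega)).1) fun ℓ _ => (hb _ (by omega)).2⟩

lemma tailSeries_term_mem_Icc (ha : ∀ i, 1 ≤ i → 0 ≤ a i) (hb : ∀ i, 1 ≤ i → b i ∈ Set.Icc 0 1)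
    {i : ℕ} (hi : 1 ≤ i) (k : ℕ) :
    (∏ ℓ ∈ range k, b (i + ℓ)) * a (i + k) ∈ Set.Icc 0 (a (i + k)) := by
  obtain ⟨hp0, hp1⟩ := prod_range_mem_Icc hb hi k
  exact ⟨mul_nonneg hp0 (ha _ (by omega)), mul_le_of_le_one_left (ha _ (by omega)) hp1⟩

lemma summable_tailSeries_term (ha : ∀ i, 1 ≤ i → 0 ≤ a i)
    (hb : ∀ i, 1 ≤ i → b i ∈ Set.Icc 0 1) (haS : Summable a) {i : ℕ} (hi : 1 ≤ i) :
    Summable fun k => (∏ ℓ ∈ range k, b (i + ℓ)) * a (i + k) :=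
  Summable.of_nonneg_of_le (fun k => (tailSeries_term_mem_Icc ha hb hi k).1)
    (fun k => (tailSeries_term_mem_Icc ha hb hi k).2)
    (((summable_nat_add_iff i).2 haS).congr fun k => by rw [add_comm])

lemma tailSeries_nonneg (ha : ∀ i, 1 ≤ i → 0 ≤ a i) (hb : ∀ i, 1 ≤ i → b i ∈ Set.Icc 0 1)
    {i : ℕ} (hi : 1 ≤ i) : 0 ≤ tailSeries a b i :=
  tsum_nonneg fun k => (tailSeries_term_mem_Icc ha hb hi k).1

lemma tailSeries_eq_add (ha : ∀ i, 1 ≤ i → 0 ≤ a i) (hb : ∀ i, 1 ≤ i → b i ∈ Set.Icc 0 1)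
    (haS : Summable a) {i : ℕ} (hi : 1 ≤ i) :
    tailSeries a b i = a i + b i * tailSeries a b (i + 1) := by
  rw [tailSeries, (summable_tailSeries_term ha hb haS hi).tsum_eq_zero_add, tailSeries,
    ← tsum_mul_left]
  congr 1
  · simp
  · refine tsum_congr fun k => ?_
    rw [prod_range_succ', add_zero]
    simp only [add_assoc, add_comm 1]
    ring

lemma tailSeries_le_tsum (ha : ∀ i, 1 ≤ i → 0 ≤ a i) (hb : ∀ i, 1 ≤ i → b i ∈ Set.Icc 0 1)
    (haS : Summable a) {i : ℕ} (hi : 1 ≤ i) : tailSeries a b i ≤ ∑' k, a (k + 1) :=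
  calc tailSeries a b i ≤ ∑' k, a (i + k) :=
        Summable.tsum_le_tsum (fun k => (tailSeries_term_mem_Icc ha hb hi k).2)
          (summable_tailSeries_term ha hb haS hi)
          (((summable_nat_add_iff i).2 haS).congr fun k => by rw [add_comm])
    _ ≤ ∑' k, a (k + 1) :=
        Summable.tsum_le_tsum_of_inj (· + (i - 1)) (add_left_injective _)
          (fun k _ => ha _ (by omega)) (fun k => le_of_eq (by congr 1; omega))
          (((summable_nat_add_iff i).2 haS).congr fun k => by rw [add_comm])
          ((summable_nat_add_iff 1).2 haS)

lemma summable_tailSeries (ha : ∀ i, 1 ≤ i → 0 ≤ a i) (hb : ∀ i, 1 ≤ i → b i ∈ Set.Icc 0 1)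
    (haS : Summable a) (hbS : Summable b) : Summable fun i => tailSeries a b (i + 1) := by
  refine Summable.of_nonneg_of_le (fun i => tailSeries_nonneg ha hb (by omega)) (fun i => ?_)
    ((summable_nat_add_iff 1).2 (haS.add (hbS.mul_right (∑' k, a (k + 1)))))
  rw [tailSeries_eq_add ha hb haS (by omega)]
  gcongr
  · exact (hb _ (by omega)).1
  · exact tailSeries_le_tsum ha hb haS (by omega)

lemma eq_tailSeries_mul_of_eq_add (ha : ∀ i, 1 ≤ i → 0 ≤ a i)
    (hb : ∀ i, 1 ≤ i → b i ∈ Set.Icc 0 1) (haS : Summable a) {f : ℕ → ℝ} {c : ℝ} {m : ℕ}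
    (hm : 1 ≤ m) (hf : Tendsto f atTop (𝓝 0)) (hrec : ∀ i, m ≤ i → f i = a i * c + b i * f (i + 1))
    {i : ℕ} (hi : m ≤ i) : f i = tailSeries a b i * c := by
  have unrolled : ∀ n, f i = (∑ k ∈ range n, (∏ ℓ ∈ range k, b (i + ℓ)) * a (i + k)) * c
      + (∏ ℓ ∈ range n, b (i + ℓ)) * f (i + n) := by
    intro n
    induction n with
    | zero => simp
    | succ n ih =>
      rw [ih, sum_range_succ, prod_range_succ, hrec (i + n) (by omega), ← add_assoc]
      ring
  have partial_sums := (summable_tailSeries_term ha hb haS (i := i) (by omega)).hasSum.tendsto_sum_nat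
  have remainder : Tendsto (fun n => (∏ ℓ ∈ range n, b (i + ℓ)) * f (i + n)) atTop (𝓝 0) := by
    have hf' : Tendsto (fun n => ‖f (i + n)‖) atTop (𝓝 0) := by
      simpa [add_comm] using (hf.comp (tendsto_add_atTop_nat i)).norm
    refine squeeze_zero_norm (fun n => ?_) hf'
    rw [norm_mul, Real.norm_of_nonneg (prod_range_mem_Icc hb (by omega) n).1]
    exact mul_le_of_le_one_left (norm_nonneg _) (prod_range_mem_Icc hb (by omega) n).2
  exact tendsto_nhds_unique (tendsto_const_nhds.congr unrolled)
    (by simpa [tailSeries] using (partial_sums.mul_const c).add remainder)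

end TailSeries

structure IsChainKernel (a b : ℕ → ℝ) (w : ℕ → ℕ → ℝ) : Prop where
  col_one : ∀ i, 1 ≤ i → w i 1 = a i
  two_two : w 2 2 = 1 - b 1
  sub_diag : ∀ i, 2 ≤ i → w (i - 1) i = b (i - 1)
  row_one : ∀ i, 3 ≤ i → w 1 i = 1 - b (i - 1)
  eq_zero : ∀ i j, 1 ≤ i → 1 ≤ j → j ≠ 1 → ¬(i = 2 ∧ j = 2) →
    ¬(2 ≤ j ∧ i = j - 1) → ¬(i = 1 ∧ 3 ≤ j) → w i j = 0

namespace IsChainKernel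

variable {a b : ℕ → ℝ} {w : ℕ → ℕ → ℝ}

lemma apply_succ_self (hw : IsChainKernel a b w) {i : ℕ} (hi : 1 ≤ i) : w i (i + 1) = b i := by
  simpa using hw.sub_diag (i + 1) (by omega)

lemma hasSum_row_of_three_le (hw : IsChainKernel a b w) (f : ℕ → ℝ) {i : ℕ} (hi : 3 ≤ i) :
    HasSum (fun j => w i (j + 1) * f (j + 1)) (a i * f 1 + b i * f (i + 1)) := by
  have hzero : ∀ j ∉ ({0, i} : Finset ℕ), w i (j + 1) * f (j + 1) = 0 := by
    intro j hj
    simp only [mem_insert, mem_singleton, not_or] at hj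
    rw [hw.eq_zero i (j + 1) (by omega) (by omega) (by omega) (by omega) (by omega) (by omega),
      zero_mul]
  convert hasSum_sum_of_ne_finset_zero (L := .unconditional ℕ) hzero using 1
  rw [sum_pair (by omega), zero_add, hw.col_one i (by omega), hw.apply_succ_self (by omega)]

lemma hasSum_row_two (hw : IsChainKernel a b w) (f : ℕ → ℝ) :
    HasSum (fun j => w 2 (j + 1) * f (j + 1)) (a 2 * f 1 + (1 - b 1) * f 2 + b 2 * f 3) := by
  have hzero : ∀ j ∉ range 3, w 2 (j + 1) * f (j + 1) = 0 := by
    intro j hj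
    rw [mem_range, not_lt] at hj
    rw [hw.eq_zero 2 (j + 1) (by omega) (by omega) (by omega) (by omega) (by omega) (by omega),
      zero_mul]
  convert hasSum_sum_of_ne_finset_zero (L := .unconditional ℕ) hzero using 1
  simp only [sum_range_succ, range_zero, sum_empty, zero_add]
  rw [hw.col_one 2 (by omega), hw.two_two, hw.apply_succ_self (by omega)]

lemma apply_one_succ (hw : IsChainKernel a b w) (j : ℕ) :
    w 1 (j + 1) = if j = 0 then a 1 else if j = 1 then b 1 else 1 - b j := by
  rcases j with _ | _ | j
  · simpa using hw.col_one 1 le_rfl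
  · simpa using hw.apply_succ_self le_rfl
  · simpa using hw.row_one (j + 2 + 1) (by omega)

end IsChainKernel

def IsTailProfile (a b f : ℕ → ℝ) : Prop :=
  b 1 * f 2 = tailSeries a b 2 * f 1 ∧ ∀ i, 3 ≤ i → f i = tailSeries a b i * f 1

namespace IsTailProfile

variable {a b f : ℕ → ℝ}

lemma eq_add (ha : ∀ i, 1 ≤ i → 0 ≤ a i) (hb : ∀ i, 1 ≤ i → b i ∈ Set.Icc 0 1)
    (haS : Summable a) (hf : IsTailProfile a b f) {i : ℕ} (hi : 3 ≤ i) :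
    f i = a i * f 1 + b i * f (i + 1) := by
  rw [hf.2 i hi, hf.2 (i + 1) (by omega), tailSeries_eq_add ha hb haS (by omega)]
  ring

lemma eq_add_two (ha : ∀ i, 1 ≤ i → 0 ≤ a i) (hb : ∀ i, 1 ≤ i → b i ∈ Set.Icc 0 1)
    (haS : Summable a) (hf : IsTailProfile a b f) : b 1 * f 2 = a 2 * f 1 + b 2 * f 3 := by
  have hT : tailSeries a b 2 = a 2 + b 2 * tailSeries a b 3 := tailSeries_eq_add ha hb haS (by omega)
  rw [hf.1, hf.2 3 le_rfl, hT]
  ring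

lemma summable (ha : ∀ i, 1 ≤ i → 0 ≤ a i) (hb : ∀ i, 1 ≤ i → b i ∈ Set.Icc 0 1)
    (haS : Summable a) (hbS : Summable b) (hf : IsTailProfile a b f) : Summable f :=
  (summable_nat_add_iff 3).1 <|
    (((summable_nat_add_iff 2).2 (summable_tailSeries ha hb haS hbS)).mul_right (f 1)).congr
      fun n => (hf.2 (n + 3) (by omega)).symm

variable {w : ℕ → ℕ → ℝ}

lemma hasSum_row_one (hw : IsChainKernel a b w) (ha : ∀ i, 1 ≤ i → 0 ≤ a i)
    (hb : ∀ i, 1 ≤ i → b i ∈ Set.Icc 0 1) (ha1 : HasSum (fun i => a (i + 1)) 1)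
    (hf : IsTailProfile a b f) (hfS : Summable f) :
    HasSum (fun j => w 1 (j + 1) * f (j + 1)) (f 1) := by
  have haS : Summable a := (summable_nat_add_iff 1).1 ha1.summable
  set d : ℕ → ℝ := fun j => if 2 ≤ j then b j * f (j + 1) else 0 with hd
  have hdS : Summable d := by
    refine ((summable_nat_add_iff 1).2 hfS).norm.of_norm_bounded fun j => ?_
    simp only [hd]
    split_ifs with hj
    · rw [norm_mul, Real.norm_of_nonneg (hb j (by omega)).1]
      exact mul_le_of_le_one_left (norm_nonneg _) (hb j (by omega)).2
    · simp
  have htel : HasSum (fun j => d (j + 1) - d j) 0 := by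
    simpa [hd] using ((hasSum_nat_add_iff' 1).2 hdS.hasSum).sub hdS.hasSum
  have hterm : ∀ j, w 1 (j + 1) * f (j + 1) = a (j + 1) * f 1 + (d (j + 1) - d j) := by
    intro j
    rw [hw.apply_one_succ]
    rcases j with _ | _ | j
    · simp [hd]
    · simp [hd, hf.eq_add_two ha hb haS]
    · simp only [hd, if_neg (show j + 2 ≠ 0 by omega), if_neg (show j + 2 ≠ 1 by omega),
        if_pos (show 2 ≤ j + 2 by omega), if_pos (show 2 ≤ j + 2 + 1 by omega)]
      linear_combination hf.eq_add ha hb haS (i := j + 3) (by omega)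
  simpa [hterm] using (ha1.mul_right (f 1)).add htel

lemma hasSum_row (hw : IsChainKernel a b w) (ha : ∀ i, 1 ≤ i → 0 ≤ a i)
    (hb : ∀ i, 1 ≤ i → b i ∈ Set.Icc 0 1) (ha1 : HasSum (fun i => a (i + 1)) 1)
    (hf : IsTailProfile a b f) (hfS : Summable f) {i : ℕ} (hi : 1 ≤ i) :
    HasSum (fun j => w i (j + 1) * f (j + 1)) (f i) := by
  have haS : Summable a := (summable_nat_add_iff 1).1 ha1.summable
  rcases (show i = 1 ∨ i = 2 ∨ 3 ≤ i by omega) with rfl | rfl | hi3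
  · exact hf.hasSum_row_one hw ha hb ha1 hfS
  · convert hw.hasSum_row_two f using 1
    linear_combination hf.eq_add_two ha hb haS
  · convert hw.hasSum_row_of_three_le f hi3 using 1
    exact hf.eq_add ha hb haS hi3

lemma of_stationary (hw : IsChainKernel a b w) (ha : ∀ i, 1 ≤ i → 0 ≤ a i)
    (hb : ∀ i, 1 ≤ i → b i ∈ Set.Icc 0 1) (haS : Summable a) (hf0 : Tendsto f atTop (𝓝 0))
    (hstat : ∀ i, 1 ≤ i → ∑' j, w i (j + 1) * f (j + 1) = f i) : IsTailProfile a b f := by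
  have hrec : ∀ i, 3 ≤ i → f i = a i * f 1 + b i * f (i + 1) := fun i hi => by
    rw [← hstat i (by omega), (hw.hasSum_row_of_three_le f hi).tsum_eq]
  have htail : ∀ i, 3 ≤ i → f i = tailSeries a b i * f 1 := fun i hi =>
    eq_tailSeries_mul_of_eq_add ha hb haS (by norm_num) hf0 hrec hi
  have hrow2 := (hw.hasSum_row_two f).tsum_eq
  rw [hstat 2 (by omega)] at hrow2
  have hT : tailSeries a b 2 = a 2 + b 2 * tailSeries a b 3 := tailSeries_eq_add ha hb haS (by omega)
  refine ⟨?_, htail⟩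
  rw [hT]
  linear_combination hrow2 + b 2 * htail 3 le_rfl

lemma apply_mul_apply_one_comm {g : ℕ → ℝ} (hf : IsTailProfile a b f) (hg : IsTailProfile a b g)
    (hb1 : b 1 ≠ 0) {i : ℕ} (hi : 1 ≤ i) : f i * g 1 = g i * f 1 := by
  rcases (show i = 1 ∨ i = 2 ∨ 3 ≤ i by omega) with rfl | rfl | hi3
  · ring
  · refine mul_left_cancel₀ hb1 ?_
    linear_combination g 1 * hf.1 - f 1 * hg.1
  · rw [hf.2 i hi3, hg.2 i hi3]
    ring

end IsTailProfile

lemma eq_div_of_hasSum_of_mul_eq_mul {ι : Type*} {p u : ι → ℝ} {S : ℝ} (hp : HasSum p 1)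
    (hu : HasSum u S) {i₀ : ι} (hu₀ : u i₀ ≠ 0) (hpu : ∀ i, p i * u i₀ = u i * p i₀) (i : ι) :
    p i = u i / S := by
  have hS : u i₀ = S * p i₀ := by
    simpa using (hp.mul_right (u i₀)).unique (by simpa only [hpu] using hu.mul_right (p i₀))
  obtain ⟨hS0, hp0⟩ := mul_ne_zero_iff.1 (hS ▸ hu₀)
  rw [eq_div_iff hS0]
  refine mul_right_cancel₀ hp0 ?_
  linear_combination hpu i - p i * hS

theorem stmt19_general (a b : ℕ → ℝ) (w : ℕ → ℕ → ℝ)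
    (ha_sum : HasSum (fun i : ℕ => a (i + 1)) 1)
    (ha : ∀ i, 1 ≤ i → 0 < a i ∧ a i < 1)
    (hb : ∀ i, 1 ≤ i → 0 < b i ∧ b i < 1)
    (C ρ : ℝ) (hρ0 : 0 < ρ) (hρ1 : ρ < 1)
    (hbC : ∀ i, 1 ≤ i → b i < C * ρ ^ i)
    (hw1 : ∀ i, 1 ≤ i → w i 1 = a i)
    (hw2 : w 2 2 = 1 - b 1)
    (hw3 : ∀ i, 2 ≤ i → w (i - 1) i = b (i - 1))
    (hw4 : ∀ i, 3 ≤ i → w 1 i = 1 - b (i - 1))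
    (hw0 : ∀ i j, 1 ≤ i → 1 ≤ j → j ≠ 1 → ¬(i = 2 ∧ j = 2) →
      ¬(2 ≤ j ∧ i = j - 1) → ¬(i = 1 ∧ 3 ≤ j) → w i j = 0)
    (v1 v2 : ℝ) (hv1 : 0 < v1) (hv2 : 0 < v2)
    (heig1 : (1 - ∑' ℓ : ℕ, (∏ k ∈ Finset.range ℓ, b (k + 2)) * a (ℓ + 2)) * v1
        + b 1 * v2 = v1)
    (u : ℕ → ℝ)
    (hu1 : u 1 = v1) (hu2 : u 2 = v2)
    (hu3 : ∀ i, 3 ≤ i →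
      u i = (∑' k : ℕ, (∏ ℓ ∈ Finset.range k, b (i + ℓ)) * a (i + k)) * v1) :
    Summable (fun j : ℕ => |u (j + 1)|) ∧
    (∀ i, 1 ≤ i → 0 ≤ u i / (∑' j : ℕ, |u (j + 1)|)) ∧
    HasSum (fun i : ℕ => u (i + 1) / (∑' j : ℕ, |u (j + 1)|)) 1 ∧
    (∀ i, 1 ≤ i →
      HasSum (fun j : ℕ => w i (j + 1) * (u (j + 1) / (∑' j' : ℕ, |u (j' + 1)|)))
        (u i / (∑' j : ℕ, |u (j + 1)|))) ∧
    (∀ q' : ℕ → ℝ, (∀ i, 1 ≤ i → 0 ≤ q' i) →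
      Summable (fun j : ℕ => q' (j + 1)) →
      (∑' i : ℕ, q' (i + 1)) = 1 →
      (∀ i, 1 ≤ i → (∑' j : ℕ, w i (j + 1) * q' (j + 1)) = q' i) →
      ∀ i, 1 ≤ i → q' i = u i / (∑' j : ℕ, |u (j + 1)|)) := by
  have ha0 : ∀ i, 1 ≤ i → 0 ≤ a i := fun i hi => (ha i hi).1.le
  have hb01 : ∀ i, 1 ≤ i → b i ∈ Set.Icc 0 1 := fun i hi => ⟨(hb i hi).1.le, (hb i hi).2.le⟩
  have haS : Summable a := (summable_nat_add_iff 1).1 ha_sum.summable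
  have hbS : Summable b := by
    refine (summable_nat_add_iff 1).1 <| Summable.of_nonneg_of_le (fun i => (hb _ (by omega)).1.le)
      (fun i => ?_) ((summable_geometric_of_lt_one hρ0.le hρ1).mul_left (C * ρ))
    simpa only [pow_succ', mul_assoc] using (hbC (i + 1) (by omega)).le
  have hw : IsChainKernel a b w := ⟨hw1, hw2, hw3, hw4, hw0⟩
  have hu : IsTailProfile a b u := by
    have hσ : ∑' ℓ : ℕ, (∏ k ∈ Finset.range ℓ, b (k + 2)) * a (ℓ + 2) = tailSeries a b 2 := by
      simp only [tailSeries, add_comm]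
    refine ⟨by rw [hu1, hu2, ← hσ]; linarith, fun i hi => by rw [hu3 i hi, hu1]; rfl⟩
  have hu0 : ∀ i, 1 ≤ i → 0 ≤ u i := by
    intro i hi
    rcases (show i = 1 ∨ i = 2 ∨ 3 ≤ i by omega) with rfl | rfl | hi3
    · exact hu1 ▸ hv1.le
    · exact hu2 ▸ hv2.le
    · exact hu.2 i hi3 ▸ mul_nonneg (tailSeries_nonneg ha0 hb01 (by omega)) (hu1 ▸ hv1.le)
  have habs : ∀ j, |u (j + 1)| = u (j + 1) := fun j => abs_of_nonneg (hu0 _ (by omega))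
  simp only [habs]
  set S := ∑' j, u (j + 1)
  have hS : HasSum (fun j => u (j + 1)) S :=
    ((summable_nat_add_iff 1).2 (hu.summable ha0 hb01 haS hbS)).hasSum
  have hS0 : 0 < S := hS.summable.tsum_pos (fun j => hu0 _ (by omega)) 0 (hu1 ▸ hv1)
  refine ⟨hS.summable, fun i hi => div_nonneg (hu0 i hi) hS0.le,
    by simpa [hS0.ne'] using hS.div_const S, fun i hi => ?_, ?_⟩
  · simpa only [mul_div_assoc] using
      (hu.hasSum_row hw ha0 hb01 ha_sum (hu.summable ha0 hb01 haS hbS) hi).div_const S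
  · intro q _ hqS hq1 hqstat i hi
    have hq : IsTailProfile a b q := IsTailProfile.of_stationary hw ha0 hb01 haS
      ((tendsto_add_atTop_iff_nat 1).1 hqS.tendsto_atTop_zero) hqstat
    obtain ⟨j, rfl⟩ : ∃ j, i = j + 1 := ⟨i - 1, by omega⟩
    exact eq_div_of_hasSum_of_mul_eq_mul (i₀ := 0) (hq1 ▸ hqS.hasSum) hS (hu1 ▸ hv1.ne')
      (fun j => hq.apply_mul_apply_one_comm hu (hb 1 le_rfl).1.ne' (by omega)) j

/-- the Markov chain on `ℕ = {1,2,…}` with transition probabilities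
`w(i,1) = a_i`, `w(2,2) = 1 − b₁`, `w(i−1,i) = b_{i−1}` for `i ≥ 2`,
`w(1,i) = 1 − b_{i−1}` for `i ≥ 3`, and `w(i,j) = 0` otherwise, where
(B1) `Σ a_i = 1`, `0 < a_i, b_i < 1`, and (B2) `b_i < C ρ^i` with `C > 1`, `0 < ρ < 1`,
has a unique stationary probability measure `q(i) = u(i)/Σ_j |u(j)|`, where `u(1) = v(1)`,
`u(2) = v(2)`, `u(i) = Σ_{k≥1} (∏_{ℓ=0}^{k−2} b_{i+ℓ}) a_{i+k−1} v(1)` for `i ≥ 3`, and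
`(v(1),v(2))` is any positive eigenvector for the eigenvalue `1` of the matrix
`[[1−σ, b₁],[σ, 1−b₁]]` with `σ = Σ_{ℓ≥0} (∏_{k=1}^{ℓ} b_{k+1}) a_{ℓ+2}`. -/
theorem stmt19 (a b : ℕ → ℝ) (w : ℕ → ℕ → ℝ)
    (ha_sum : HasSum (fun i : ℕ => a (i + 1)) 1)
    (ha : ∀ i, 1 ≤ i → 0 < a i ∧ a i < 1)
    (hb : ∀ i, 1 ≤ i → 0 < b i ∧ b i < 1)
    (C ρ : ℝ) (hC : 1 < C) (hρ0 : 0 < ρ) (hρ1 : ρ < 1)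
    (hbC : ∀ i, 1 ≤ i → b i < C * ρ ^ i)
    (hw1 : ∀ i, 1 ≤ i → w i 1 = a i)
    (hw2 : w 2 2 = 1 - b 1)
    (hw3 : ∀ i, 2 ≤ i → w (i - 1) i = b (i - 1))
    (hw4 : ∀ i, 3 ≤ i → w 1 i = 1 - b (i - 1))
    (hw0 : ∀ i j, 1 ≤ i → 1 ≤ j → j ≠ 1 → ¬(i = 2 ∧ j = 2) →
      ¬(2 ≤ j ∧ i = j - 1) → ¬(i = 1 ∧ 3 ≤ j) → w i j = 0)
    (v1 v2 : ℝ) (hv1 : 0 < v1) (hv2 : 0 < v2)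
    (heig1 : (1 - ∑' ℓ : ℕ, (∏ k ∈ Finset.range ℓ, b (k + 2)) * a (ℓ + 2)) * v1
        + b 1 * v2 = v1)
    (heig2 : (∑' ℓ : ℕ, (∏ k ∈ Finset.range ℓ, b (k + 2)) * a (ℓ + 2)) * v1
        + (1 - b 1) * v2 = v2)
    (u : ℕ → ℝ)
    (hu1 : u 1 = v1) (hu2 : u 2 = v2)
    (hu3 : ∀ i, 3 ≤ i →
      u i = (∑' k : ℕ, (∏ ℓ ∈ Finset.range k, b (i + ℓ)) * a (i + k)) * v1) :
    Summable (fun j : ℕ => |u (j + 1)|) ∧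
    (∀ i, 1 ≤ i → 0 ≤ u i / (∑' j : ℕ, |u (j + 1)|)) ∧
    HasSum (fun i : ℕ => u (i + 1) / (∑' j : ℕ, |u (j + 1)|)) 1 ∧
    (∀ i, 1 ≤ i →
      HasSum (fun j : ℕ => w i (j + 1) * (u (j + 1) / (∑' j' : ℕ, |u (j' + 1)|)))
        (u i / (∑' j : ℕ, |u (j + 1)|))) ∧
    (∀ q' : ℕ → ℝ, (∀ i, 1 ≤ i → 0 ≤ q' i) →
      Summable (fun j : ℕ => q' (j + 1)) →
      (∑' i : ℕ, q' (i + 1)) = 1 →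
      (∀ i, 1 ≤ i → (∑' j : ℕ, w i (j + 1) * q' (j + 1)) = q' i) →
      ∀ i, 1 ≤ i → q' i = u i / (∑' j : ℕ, |u (j + 1)|)) :=
  stmt19_general a b w ha_sum ha hb C ρ hρ0 hρ1 hbC hw1 hw2 hw3 hw4 hw0 v1 v2 hv1 hv2 heig1 u hu1
    hu2 hu3
end
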